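/- If two configurations have syntactically equal commands and both make one small step with the same leakage, then the resulting configurations also have syntactically equal commands, provided the semantics records in the leakage the boolean value of every evaluated guard. -/
import Mathlib


/-- Arithmetic operators. -/
inductive AOp | add | sub | mul | div | mod
deriving DecidableEq

/-- Arithmetic expressions. -/
inductive AExpr
  | const (v : Int)
  | var (x : String)
  | binop (o : AOp) (e1 e2 : AExpr)
deriving DecidableEq

/-- Boolean expressions. -/
inductive BExpr
  | tt
  | ff
  | or (b1 b2 : BExpr)
  | not (b : BExpr)
  | le (e1 e2 : AExpr)
  | eq (e1 e2 : AExpr)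
deriving DecidableEq

/-- Commands of the small imperative language. -/
inductive Cmd
  | skip
  | assign (x : String) (e : AExpr)
  | seq (c1 c2 : Cmd)
  | ite (b : BExpr) (c1 c2 : Cmd)
  | whileDo (b : BExpr) (c : Cmd)
deriving DecidableEq

abbrev Store := String → Int

def AOp.denote : AOp → Int → Int → Int
  | .add => (· + ·)
  | .sub => (· - ·)
  | .mul => (· * ·)
  | .div => (· / ·)
  | .mod => (· % ·)

/-- Total evaluation of arithmetic expressions. -/
def aeval : AExpr → Store → Int
  | .const v, _ => v
  | .var x, σ => σ x
  | .binop o e1 e2, σ => o.denote (aeval e1 σ) (aeval e2 σ)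

/-- Total evaluation of boolean expressions. -/
def beval : BExpr → Store → Bool
  | .tt, _ => true
  | .ff, _ => false
  | .or b1 b2, σ => beval b1 σ || beval b2 σ
  | .not b, σ => !(beval b σ)
  | .le e1 e2, σ => decide (aeval e1 σ ≤ aeval e2 σ)
  | .eq e1 e2, σ => decide (aeval e1 σ = aeval e2 σ)

/-- Atomic leaks. -/
inductive Leak
  | eps
  | op (o : AOp)
  | ident (x : String)
  | branch (b : Bool)
deriving DecidableEq

/-- Leakage of an arithmetic expression in a state. -/
def aleak : AExpr → Store → List Leak
  | .const _, _ => [.eps]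
  | .var _, _ => [.eps]
  | .binop o e1 e2, σ => aleak e1 σ ++ aleak e2 σ ++ [.op o]

/-- Leakage of a boolean expression in a state. -/
def bleak : BExpr → Store → List Leak
  | .tt, _ => [.eps]
  | .ff, _ => [.eps]
  | .not b, σ => bleak b σ
  | .or b1 b2, σ => bleak b1 σ ++ bleak b2 σ
  | .le e1 e2, σ => aleak e1 σ ++ aleak e2 σ
  | .eq e1 e2, σ => aleak e1 σ ++ aleak e2 σ

/-- Instrumented small-step operational semantics. -/
inductive Step : Cmd × Store → List Leak → Cmd × Store → Prop
  | assign {x e σ} :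
      Step (.assign x e, σ) (aleak e σ ++ [.ident x])
        (.skip, Function.update σ x (aeval e σ))
  | seqStep {c1 σ t c1' σ'} (c2 : Cmd) :
      Step (c1, σ) t (c1', σ') → Step (.seq c1 c2, σ) t (.seq c1' c2, σ')
  | seqSkip {σ} (c2 : Cmd) : Step (.seq .skip c2, σ) [.eps] (c2, σ)
  | iteTrue {b c1 c2 σ} :
      beval b σ = true →
      Step (.ite b c1 c2, σ) (bleak b σ ++ [.branch true]) (c1, σ)
  | iteFalse {b c1 c2 σ} :
      beval b σ = false →
      Step (.ite b c1 c2, σ) (bleak b σ ++ [.branch false]) (c2, σ)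
  | whileUnfold {b c σ} :
      Step (.whileDo b c, σ) [.eps] (.ite b (.seq c (.whileDo b c)) .skip, σ)

/-- Reflexive-transitive closure of the step relation (leaks ignored). -/
inductive StepStar : Cmd × Store → Cmd × Store → Prop
  | refl (A : Cmd × Store) : StepStar A A
  | tail {A B C : Cmd × Store} {t : List Leak} : StepStar A B → Step B t C → StepStar A C

/-- n-step execution, accumulating leakage. -/
inductive StepsN : Cmd × Store → ℕ → List Leak → Cmd × Store → Prop
  | refl (A : Cmd × Store) : StepsN A 0 [] A
  | step {A B C : Cmd × Store} {t u : List Leak} {n : ℕ} :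
      Step A t B → StepsN B n u C → StepsN A (n + 1) (t ++ u) C

/-- configurations with syntactically equal commands that make one
step with the same leakage again have syntactically equal commands. -/
theorem eqc_step_eqc {c : Cmd} {σ σ' : Store} {t : List Leak}
    {c1 c2 : Cmd} {σ1 σ2 : Store}
    (h : Step (c, σ) t (c1, σ1)) (h' : Step (c, σ') t (c2, σ2)) :
    c1 = c2 := by
  have key : ∀ {A : Cmd × Store} {t B}, Step A t B →
      ∀ {σ' : Store} {t' c2 σ2},
      Step (A.1, σ') t' (c2, σ2) → t = t' → B.1 = c2 := by
    intro A t B h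
    induction h with
    | assign => intro _ _ _ _ h' _; cases h'; rfl
    | seqStep cc hstep ih =>
      intro _ _ _ _ h' ht
      cases h' with
      | seqStep _ hstep' => exact congrArg (fun x => Cmd.seq x cc) (ih hstep' ht)
      | seqSkip => cases hstep
    | seqSkip =>
      intro _ _ _ _ h' _
      cases h' with
      | seqStep _ hstep' => cases hstep'
      | seqSkip => rfl
    | iteTrue hb =>
      intro _ _ _ _ h' ht
      cases h' with
      | iteTrue => rfl
      | iteFalse hb' =>
        have := congrArg List.getLast? ht
        simp at this
    | iteFalse hb =>
      intro _ _ _ _ h' ht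
      cases h' with
      | iteFalse => rfl
      | iteTrue hb' =>
        have := congrArg List.getLast? ht
        simp at this
    | whileUnfold => intro _ _ _ _ h' _; cases h'; rfl
  exact key h h' rfl
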